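/- With the assumptions of the previous statement (F affine cryptographic semi-regular, D = d_reg(⟨F^top⟩) < ∞), the multiplication-by-y map (R'/⟨F^h⟩)_{d-1} → (R'/⟨F^h⟩)_d is injective for all d < D and surjective for all d ≥ D. In particular, the Hilbert function of R'/⟨F^h⟩ is monotonically increasing up to degree D-1 and monotonically non-increasing from degree D-1 on. -/

import Mathlib

open MvPolynomial

namespace GBPaper

/-- The dimension of the degree-`d` homogeneous piece of `R/I`,
where `R = K[x_i : i ∈ σ]`. -/
noncomputable def hilbertFn (K : Type*) [Field K] {σ : Type*}
    (I : Ideal (MvPolynomial σ K)) (d : ℕ) : ℕ :=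
  Module.finrank K
    ((MvPolynomial.homogeneousSubmodule σ K d).map
      (Ideal.Quotient.mkₐ K I).toLinearMap)

/-- An ideal is homogeneous iff it contains all homogeneous components of its elements. -/
def IsHomogeneousIdeal {K : Type*} [Field K] {σ : Type*}
    (I : Ideal (MvPolynomial σ K)) : Prop :=
  ∀ f ∈ I, ∀ d : ℕ, MvPolynomial.homogeneousComponent d f ∈ I

/-- The degree of regularity: the least `d` with `R_d = I_d`. -/
noncomputable def degReg (K : Type*) [Field K] {σ : Type*}
    (I : Ideal (MvPolynomial σ K)) : ℕ :=
  sInf {d : ℕ | ∀ f : MvPolynomial σ K, f.IsHomogeneous d → f ∈ I}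

/-- The generalized degree of regularity: the least `d₀` from which on the Hilbert
function of `R/I` is constant. -/
noncomputable def gdegReg (K : Type*) [Field K] {σ : Type*}
    (I : Ideal (MvPolynomial σ K)) : ℕ :=
  sInf {d₀ : ℕ | ∀ d : ℕ, d₀ ≤ d → hilbertFn K I d = hilbertFn K I d₀}

/-- The leading monomial (leading exponent) of a polynomial with respect to a
monomial order. -/
noncomputable def lm {K : Type*} [Field K] {σ : Type*} (m : MonomialOrder σ)
    (f : MvPolynomial σ K) : σ →₀ ℕ :=
  m.toSyn.symm (f.support.sup fun s => m.toSyn s)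

/-- A monomial order is graded (degree-compatible) if it refines total degree. -/
def MonIsGraded {σ : Type*} (m : MonomialOrder σ) : Prop :=
  ∀ a b : σ →₀ ℕ, a.degree < b.degree → m.toSyn a < m.toSyn b

/-- `G` is the reduced Gröbner basis of `I` with respect to the monomial order `m`. -/
structure IsReducedGB {K : Type*} [Field K] {σ : Type*} (m : MonomialOrder σ)
    (I : Ideal (MvPolynomial σ K)) (G : Finset (MvPolynomial σ K)) : Prop where
  subset : (G : Set (MvPolynomial σ K)) ⊆ I
  zero_not_mem : (0 : MvPolynomial σ K) ∉ G
  monic : ∀ g ∈ G, MvPolynomial.coeff (lm m g) g = 1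
  isGB : ∀ f ∈ I, f ≠ 0 → ∃ g ∈ G, lm m g ≤ lm m f
  reduced : ∀ g ∈ G, ∀ g' ∈ G, g ≠ g' → ∀ s ∈ g.support, ¬ lm m g' ≤ s

/-- The degree reverse lexicographic order with `x_0 ≻ x_1 ≻ ⋯`. -/
def IsDegRevLex {n : ℕ} (m : MonomialOrder (Fin n)) : Prop :=
  ∀ a b : Fin n →₀ ℕ, m.toSyn a < m.toSyn b ↔
    (a.degree < b.degree ∨
      (a.degree = b.degree ∧ ∃ i, b i < a i ∧ ∀ j, i < j → a j = b j))

/-- Restriction of an exponent vector on `n+1` variables to the first `n` variables. -/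
noncomputable def restr {n : ℕ} (a : Fin (n + 1) →₀ ℕ) : Fin n →₀ ℕ :=
  Finsupp.equivFunOnFinite.symm fun i => a i.castSucc

/-- Extension of an exponent vector on `n` variables to `n+1` variables (with
`y`-exponent `0`). -/
noncomputable def extX {n : ℕ} (a : Fin n →₀ ℕ) : Fin (n + 1) →₀ ℕ :=
  Finsupp.embDomain Fin.castSuccEmb a

/-- `m'` is the homogenization (w.r.t. the last variable `y`) of the graded
monomial order `m₀`: it compares first total degrees, then the `X`-parts using `m₀`. -/
def IsHomogenizationOrder {n : ℕ} (m' : MonomialOrder (Fin (n + 1)))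
    (m₀ : MonomialOrder (Fin n)) : Prop :=
  ∀ a b : Fin (n + 1) →₀ ℕ, m'.toSyn a < m'.toSyn b ↔
    (a.degree < b.degree ∨
      (a.degree = b.degree ∧ m₀.toSyn (restr a) < m₀.toSyn (restr b)))

/-- The top part (maximal total degree part) of a polynomial. -/
noncomputable def topPart {K : Type*} [Field K] {σ : Type*}
    (f : MvPolynomial σ K) : MvPolynomial σ K :=
  MvPolynomial.homogeneousComponent f.totalDegree f

/-- The homogenization of `f ∈ K[x_1,…,x_n]` by the extra (last) variable `y`. -/
noncomputable def homog {K : Type*} [Field K] {n : ℕ}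
    (f : MvPolynomial (Fin n) K) : MvPolynomial (Fin (n + 1)) K :=
  ∑ s ∈ f.support,
    MvPolynomial.monomial
      (extX s + Finsupp.single (Fin.last n) (f.totalDegree - s.degree))
      (f.coeff s)

/-- The last variable `y` used for homogenization. -/
noncomputable def yvar (K : Type*) [Field K] (n : ℕ) : MvPolynomial (Fin (n + 1)) K :=
  MvPolynomial.X (Fin.last n)

/-- Substituting `y = 0`, the "top part" of a homogeneous polynomial in `R[y]`. -/
noncomputable def setYZero {K : Type*} [Field K] {n : ℕ}
    (g : MvPolynomial (Fin (n + 1)) K) : MvPolynomial (Fin (n + 1)) K :=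
  MvPolynomial.aeval
    (fun i => if i = Fin.last n then 0 else MvPolynomial.X i) g

/-- The ideal generated by the polynomials `f j` for `j < i`. -/
noncomputable def prevIdeal {K : Type*} [Field K] {σ : Type*} {M : ℕ}
    (f : Fin M → MvPolynomial σ K) (i : Fin M) : Ideal (MvPolynomial σ K) :=
  Ideal.span (f '' {j | j < i})

/-- `d`-regularity of a sequence of homogeneous polynomials of degrees `dg`. -/
def IsDRegularSeq {K : Type*} [Field K] {σ : Type*} {M : ℕ}
    (f : Fin M → MvPolynomial σ K) (dg : Fin M → ℕ) (d : ℕ) : Prop :=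
  ∀ i : Fin M, ∀ g : MvPolynomial σ K, ∀ e : ℕ,
    g.IsHomogeneous e → e + dg i < d →
    g * f i ∈ prevIdeal f i → g ∈ prevIdeal f i

/-- Semi-regularity (Pardue): each multiplication map on graded pieces of the
successive quotients is injective or surjective. -/
def IsSemiRegularSeq {K : Type*} [Field K] {σ : Type*} {M : ℕ}
    (f : Fin M → MvPolynomial σ K) (dg : Fin M → ℕ) : Prop :=
  ∀ i : Fin M, ∀ t : ℕ, dg i ≤ t →
    (∀ g : MvPolynomial σ K, g.IsHomogeneous (t - dg i) →
        g * f i ∈ prevIdeal f i → g ∈ prevIdeal f i) ∨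
    (∀ h : MvPolynomial σ K, h.IsHomogeneous t →
        ∃ g : MvPolynomial σ K, g.IsHomogeneous (t - dg i) ∧
          h - g * f i ∈ prevIdeal f i)

/-- The power series `∏ (1 - z^{d_i}) / (1-z)^n` over `ℤ`. -/
noncomputable def semiRegSeries (n : ℕ) {M : ℕ} (dg : Fin M → ℕ) : PowerSeries ℤ :=
  (∏ i : Fin M, (1 - (PowerSeries.X : PowerSeries ℤ) ^ dg i)) *
    ((PowerSeries.invOneSubPow ℤ n : (PowerSeries ℤ)ˣ) : PowerSeries ℤ)

/-- The cutoff of the truncation `[·]`: the first index with a nonpositive coefficient. -/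
noncomputable def truncCutoff (P : PowerSeries ℤ) : ℕ :=
  sInf {t : ℕ | PowerSeries.coeff (R := ℤ) t P ≤ 0}

/-- The coefficient of `z^t` in the series `[P]` obtained by truncating `P` after
the last consecutive positive coefficient. -/
noncomputable def truncCoeff (P : PowerSeries ℤ) (t : ℕ) : ℤ :=
  if t < truncCutoff P then PowerSeries.coeff (R := ℤ) t P else 0

section Koszul

variable {K : Type*} [Field K] {σ : Type*} {M : ℕ}

/-- Index set of the degree-`i` part of the Koszul complex on `M` polynomials. -/
abbrev KIdx (M i : ℕ) := {s : Finset (Fin M) // s.card = i}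

/-- The Koszul differential `K_{i+1} → K_i` of the Koszul complex on `f`. -/
noncomputable def koszulD (f : Fin M → MvPolynomial σ K) (i : ℕ)
    (v : KIdx M (i + 1) → MvPolynomial σ K) :
    KIdx M i → MvPolynomial σ K :=
  fun t => ∑ j : Fin M,
    if h : j ∈ t.val then 0
    else ((-1 : MvPolynomial σ K) ^ (t.val.filter (fun l => l < j)).card) * f j *
      v ⟨insert j t.val, by rw [Finset.card_insert_of_notMem h, t.prop]⟩

/-- A Koszul `i`-chain is homogeneous of (internal) degree `d`: each component at a
subset `s` is homogeneous of degree `d - ∑_{j ∈ s} dg j` (and zero if `d` is smaller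
than this shift). -/
def KChainHom (dg : Fin M → ℕ) (i : ℕ)
    (v : KIdx M i → MvPolynomial σ K) (d : ℕ) : Prop :=
  ∀ t : KIdx M i,
    (v t).IsHomogeneous (d - ∑ j ∈ t.val, dg j) ∧
    (d < ∑ j ∈ t.val, dg j → v t = 0)

/-- A Koszul `i`-cycle: an `i`-chain killed by the Koszul differential
(every `0`-chain is a cycle). -/
def IsKCycle (f : Fin M → MvPolynomial σ K) :
    (i : ℕ) → (KIdx M i → MvPolynomial σ K) → Prop
  | 0, _ => True
  | (i + 1), v => koszulD f i v = 0

/-- The degree-`d` part of the `i`-th Koszul homology of `f` vanishes: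
every homogeneous cycle of degree `d` is a boundary. -/
def KoszulHVanish (f : Fin M → MvPolynomial σ K) (dg : Fin M → ℕ)
    (i d : ℕ) : Prop :=
  ∀ v : KIdx M i → MvPolynomial σ K, KChainHom dg i v d → IsKCycle f i v →
    ∃ w : KIdx M (i + 1) → MvPolynomial σ K, koszulD f i w = v

/-- The sum `∑ v_j f_j` of which syzygies are the kernel. -/
noncomputable def syzSum (f v : Fin M → MvPolynomial σ K) : MvPolynomial σ K :=
  ∑ j : Fin M, v j * f j

/-- The module of trivial (Koszul) syzygies of `f`. -/
noncomputable def trivSyz (f : Fin M → MvPolynomial σ K) :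
    Submodule (MvPolynomial σ K) (Fin M → MvPolynomial σ K) :=
  Submodule.span (MvPolynomial σ K)
    {w | ∃ i j : Fin M, i < j ∧ w = Pi.single j (f i) - Pi.single i (f j)}

/-- A tuple `v` is homogeneous of degree `e` as an element of `⊕ R(-dg j)`. -/
def TupleHom (dg : Fin M → ℕ) (v : Fin M → MvPolynomial σ K) (e : ℕ) : Prop :=
  ∀ j : Fin M, (v j).IsHomogeneous (e - dg j) ∧ (e < dg j → v j = 0)

end Koszul

end GBPaper

namespace GBPaper

/-- The top part `h|_{y=0}` of a homogeneous polynomial in `R' = R[y]`,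
viewed as an element of `R = K[x_1,…,x_n]`. -/
noncomputable def topPartR {K : Type*} [Field K] {n : ℕ}
    (g : MvPolynomial (Fin (n + 1)) K) : MvPolynomial (Fin n) K :=
  MvPolynomial.aeval (Fin.lastCases 0 fun i => MvPolynomial.X i) g

end GBPaper

/-!
Setting `y = 0` is a ring map `R' → R` sending `f_i^h` to `f_i^top`, and a homogeneous `p ∈ R'`
with `p|_{y=0} = 0` is divisible by `y`.

If `y·g = Σ a_i f_i^h` with `deg g + 1 < D`, then `Σ a_i|_{y=0} f_i^top = 0` is a syzygy of the
top parts below the degree of regularity, so by `D`-regularity it is a Koszul syzygy. Koszul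
syzygies lift to Koszul syzygies of the `f_i^h`, which sum to zero; subtracting the lift leaves
coefficients divisible by `y`, and cancelling `y` gives `g ∈ ⟨F^h⟩`.

If `deg g ≥ D`, then `g|_{y=0} ∈ ⟨F^top⟩`, say `g|_{y=0} = Σ c_i f_i^top`, and
`g - Σ c_i f_i^h` is divisible by `y`. The Hilbert function inequalities are the dimension count
for these injective, resp. surjective, multiplication maps.
-/

namespace GBPaper

section Graded

variable {σ R : Type*} [CommSemiring R]

attribute [local instance] MvPolynomial.gradedAlgebra in
lemma homogeneousComponent_mul_of_isHomogeneous {a h : MvPolynomial σ R} {e : ℕ}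
    (hh : h.IsHomogeneous e) (d : ℕ) :
    homogeneousComponent d (a * h) =
      if e ≤ d then homogeneousComponent (d - e) a * h else 0 := by
  classical
  have := DirectSum.coe_decompose_mul_of_right_mem (homogeneousSubmodule σ R) d (a := a) hh
  simpa only [← DirectSum.Decomposition.decompose'_eq,
    decomposition.decompose'_apply] using this

lemma mem_of_isHomogeneous_of_le {I : Ideal (MvPolynomial σ R)} {e e' : ℕ}
    (hI : ∀ p : MvPolynomial σ R, p.IsHomogeneous e → p ∈ I) (he : e ≤ e')
    {p : MvPolynomial σ R} (hp : p.IsHomogeneous e') : p ∈ I := by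
  have hsplit : homogeneousSubmodule σ R e' ≤
      homogeneousSubmodule σ R (e' - e) * homogeneousSubmodule σ R e := by
    rw [← homogeneousSubmodule_one_pow (σ := σ) R e', ← homogeneousSubmodule_one_pow R (e' - e),
      ← homogeneousSubmodule_one_pow R e, ← pow_add, Nat.sub_add_cancel he]
  exact (Submodule.mul_le (P := I.restrictScalars R)).2
    (fun a _ b hb => I.mul_mem_left a (hI b hb)) (hsplit hp)

lemma _root_.MvPolynomial.IsHomogeneous.of_X_mul {i : σ} {h : MvPolynomial σ R} {d : ℕ}
    (hXh : (X i * h).IsHomogeneous d) : h.IsHomogeneous (d - 1) := by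
  intro s hs
  have := hXh (show coeff (Finsupp.single i 1 + s) (X i * h) ≠ 0 by rwa [coeff_X_mul])
  rw [map_add, Finsupp.weight_single, Pi.one_apply, smul_eq_mul, mul_one] at this
  omega

end Graded

section Syzygy

variable {K : Type*} [Field K] {σ : Type*} {M : ℕ}

lemma syzSum_sub (F v w : Fin M → MvPolynomial σ K) :
    syzSum F (v - w) = syzSum F v - syzSum F w := by
  simp only [syzSum, Pi.sub_apply, sub_mul, Finset.sum_sub_distrib]

lemma syzSum_mem_span_range (F v : Fin M → MvPolynomial σ K) :
    syzSum F v ∈ Ideal.span (Set.range F) :=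
  Ideal.sum_mem _ fun i _ => Ideal.mul_mem_left _ _ (Ideal.subset_span ⟨i, rfl⟩)

lemma syzSum_eq_zero_of_mem_trivSyz (F : Fin M → MvPolynomial σ K)
    {w : Fin M → MvPolynomial σ K} (hw : w ∈ trivSyz F) : syzSum F w = 0 := by
  have hle : trivSyz F ≤ LinearMap.ker (Fintype.linearCombination (MvPolynomial σ K) F) := by
    refine Submodule.span_le.2 ?_
    rintro _ ⟨i, j, -, rfl⟩
    simp [Fintype.linearCombination_apply, Pi.single_apply, mul_sub, Finset.sum_sub_distrib,
      mul_comm]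
  simpa [syzSum, Fintype.linearCombination_apply] using hle hw

lemma single_sub_single_mem_trivSyz (F : Fin M → MvPolynomial σ K) (i j : Fin M) :
    Pi.single j (F i) - Pi.single i (F j) ∈ trivSyz F := by
  rcases lt_trichotomy i j with h | rfl | h
  · exact Submodule.subset_span ⟨i, j, h, rfl⟩
  · simp
  · rw [← neg_sub]
    exact neg_mem (Submodule.subset_span ⟨j, i, h, rfl⟩)

lemma single_syzSum_sub_mem_trivSyz (F b : Fin M → MvPolynomial σ K) (ι : Fin M) :
    Pi.single ι (syzSum F b) - (fun i => b i * F ι) ∈ trivSyz F := by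
  have hsum : Pi.single ι (syzSum F b) - (fun i => b i * F ι) =
      ∑ j, b j • (Pi.single ι (F j) - Pi.single j (F ι)) := by
    ext i
    by_cases hi : i = ι
    · subst hi
      simp [syzSum, Pi.single_apply, mul_sub, Finset.sum_sub_distrib]
    · simp [syzSum, Pi.single_apply, hi]
  rw [hsum]
  exact Submodule.sum_mem _ fun j _ =>
    Submodule.smul_mem _ _ (single_sub_single_mem_trivSyz F j ι)

lemma exists_mem_trivSyz_map_eq {τ : Type*} (φ : MvPolynomial σ K →+* MvPolynomial τ K)
    (hφ : Function.Surjective φ) (F : Fin M → MvPolynomial σ K)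
    {w : Fin M → MvPolynomial τ K} (hw : w ∈ trivSyz fun i => φ (F i)) :
    ∃ w' ∈ trivSyz F, (fun i => φ (w' i)) = w := by
  induction hw using Submodule.span_induction with
  | mem x hx =>
    obtain ⟨i, j, hij, rfl⟩ := hx
    refine ⟨_, Submodule.subset_span ⟨i, j, hij, rfl⟩, funext fun k => ?_⟩
    simp only [Pi.sub_apply, map_sub, Pi.apply_single (fun _ => φ) (fun _ => map_zero φ)]
  | zero => exact ⟨0, zero_mem _, funext fun _ => map_zero φ⟩
  | add x y _ _ hx hy =>
    obtain ⟨x', hx', rfl⟩ := hx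
    obtain ⟨y', hy', rfl⟩ := hy
    exact ⟨x' + y', add_mem hx' hy', funext fun _ => map_add φ _ _⟩
  | smul r x _ hx =>
    obtain ⟨r', rfl⟩ := hφ r
    obtain ⟨x', hx', rfl⟩ := hx
    exact ⟨r' • x', Submodule.smul_mem _ _ hx', funext fun _ => map_mul φ _ _⟩

variable {dg : Fin M → ℕ} {e : ℕ}

lemma TupleHom.sub {v w : Fin M → MvPolynomial σ K} (hv : TupleHom dg v e)
    (hw : TupleHom dg w e) : TupleHom dg (v - w) e :=
  fun j => ⟨(hv j).1.sub (hw j).1, fun h => by simp [(hv j).2 h, (hw j).2 h]⟩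

lemma TupleHom.single {v : Fin M → MvPolynomial σ K} (hv : TupleHom dg v e) (ι : Fin M) :
    TupleHom dg (Pi.single ι (v ι)) e := by
  intro j
  by_cases hj : j = ι
  · subst hj
    simpa using hv j
  · simpa [hj] using isHomogeneous_zero _ _ _

lemma TupleHom.mul_right {b : Fin M → MvPolynomial σ K} {p : MvPolynomial σ K} {k : ℕ}
    (hb : TupleHom dg b (e - k)) (hp : p.IsHomogeneous k) (hk : k ≤ e) :
    TupleHom dg (fun i => b i * p) e := by
  intro i
  by_cases hi : dg i ≤ e - k
  · refine ⟨?_, fun h => by omega⟩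
    have := (hb i).1.mul hp
    rwa [show e - k - dg i + k = e - dg i by omega] at this
  · simpa [(hb i).2 (by omega)] using isHomogeneous_zero _ _ _

lemma TupleHom.map {τ : Type*} {v : Fin M → MvPolynomial σ K}
    (φ : MvPolynomial σ K →+* MvPolynomial τ K)
    (hφ : ∀ p d, p.IsHomogeneous d → (φ p).IsHomogeneous d) (hv : TupleHom dg v e) :
    TupleHom dg (fun i => φ (v i)) e :=
  fun j => ⟨hφ _ _ (hv j).1, fun h => by simp [(hv j).2 h]⟩

lemma TupleHom.isHomogeneous_syzSum {F v : Fin M → MvPolynomial σ K}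
    (hF : ∀ i, (F i).IsHomogeneous (dg i)) (hv : TupleHom dg v e) :
    (syzSum F v).IsHomogeneous e := by
  refine IsHomogeneous.sum _ _ _ fun i _ => ?_
  by_cases hi : dg i ≤ e
  · have := (hv i).1.mul (hF i)
    rwa [Nat.sub_add_cancel hi] at this
  · simpa [(hv i).2 (by omega)] using isHomogeneous_zero _ _ _

lemma exists_tupleHom_of_mem_span_image {F : Fin M → MvPolynomial σ K}
    (hF : ∀ i, (F i).IsHomogeneous (dg i)) {S : Set (Fin M)} {p : MvPolynomial σ K}
    (hp : p.IsHomogeneous e) (hmem : p ∈ Ideal.span (F '' S)) :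
    ∃ c, TupleHom dg c e ∧ (∀ j ∉ S, c j = 0) ∧ syzSum F c = p := by
  classical
  obtain ⟨l, hl, hlp⟩ :=
    (Finsupp.mem_span_image_iff_linearCombination (MvPolynomial σ K)).1 hmem
  have hsum : ∑ j, l j * F j = p := by
    rw [← hlp, Finsupp.linearCombination_apply, Finsupp.sum_fintype _ _ (by simp)]
    rfl
  refine ⟨fun j => if dg j ≤ e then homogeneousComponent (e - dg j) (l j) else 0,
    fun j => ⟨?_, fun h => if_neg (by omega)⟩, fun j hj => ?_, ?_⟩
  · dsimp only
    split_ifs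
    exacts [homogeneousComponent_isHomogeneous _ _, isHomogeneous_zero _ _ _]
  · simp [(Finsupp.mem_supported' _ _).1 hl j hj]
  · rw [← homogeneousComponent_eq_self hp, ← hsum, map_sum]
    exact Finset.sum_congr rfl fun j _ => by
      rw [homogeneousComponent_mul_of_isHomogeneous (hF j), ite_mul, zero_mul]

end Syzygy

section Regular

variable {K : Type*} [Field K] {σ : Type*} {M : ℕ} {F : Fin M → MvPolynomial σ K}
  {dg : Fin M → ℕ} {D e : ℕ}

lemma mul_mem_prevIdeal_of_syzSum_eq_zero {a : Fin M → MvPolynomial σ K}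
    (hsyz : syzSum F a = 0) {ι : Fin M} (hvan : ∀ i, ι < i → a i = 0) :
    a ι * F ι ∈ prevIdeal F ι := by
  have h : a ι * F ι = -∑ i ∈ Finset.univ.erase ι, a i * F i := by
    rw [eq_neg_iff_add_eq_zero, Finset.add_sum_erase _ (fun i => a i * F i) (Finset.mem_univ ι)]
    exact hsyz
  rw [h]
  refine neg_mem (Ideal.sum_mem _ fun i hi => ?_)
  rcases lt_or_gt_of_ne (Finset.ne_of_mem_erase hi) with hlt | hgt
  · exact Ideal.mul_mem_left _ _ (Ideal.subset_span ⟨i, hlt, rfl⟩)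
  · simp [hvan i hgt]

lemma IsDRegularSeq.exists_mem_trivSyz_sub_vanishing (hreg : IsDRegularSeq F dg D)
    (hF : ∀ i, (F i).IsHomogeneous (dg i)) (he : e < D) {a : Fin M → MvPolynomial σ K}
    (ha : TupleHom dg a e) (hsyz : syzSum F a = 0) {ι : Fin M}
    (hvan : ∀ i, ι < i → a i = 0) :
    ∃ t ∈ trivSyz F, TupleHom dg (a - t) e ∧ ∀ i, ι ≤ i → (a - t) i = 0 := by
  rcases lt_or_ge e (dg ι) with hι | hι
  · refine ⟨0, zero_mem _, by simpa using ha, fun i hi => ?_⟩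
    rcases hi.lt_or_eq with hlt | rfl
    · simp [hvan i hlt]
    · simpa using (ha ι).2 (by omega)
  -- Regularity puts `a ι = Σ_{j < ι} b j * F j` into `prevIdeal F ι`; subtracting the Koszul
  -- syzygy `Σ_j b j • (e_ι F j - e_j F ι)` clears the `ι`-th entry.
  have haι : a ι ∈ prevIdeal F ι :=
    hreg ι (a ι) _ (ha ι).1 (by omega) (mul_mem_prevIdeal_of_syzSum_eq_zero hsyz hvan)
  obtain ⟨b, hb, hbS, hbsum⟩ := exists_tupleHom_of_mem_span_image hF (ha ι).1 haι
  refine ⟨Pi.single ι (syzSum F b) - fun i => b i * F ι, single_syzSum_sub_mem_trivSyz F b ι,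
    ?_, fun i hi => ?_⟩
  · rw [hbsum]
    exact ha.sub ((ha.single ι).sub (hb.mul_right (hF ι) hι))
  · have hbi : b i = 0 := hbS i (not_lt.2 hi)
    rcases hi.lt_or_eq with hlt | rfl
    · simp [hvan i hlt, hbi, hlt.ne']
    · simp [hbsum, hbi]

theorem IsDRegularSeq.mem_trivSyz (hreg : IsDRegularSeq F dg D)
    (hF : ∀ i, (F i).IsHomogeneous (dg i)) (he : e < D) {a : Fin M → MvPolynomial σ K}
    (ha : TupleHom dg a e) (hsyz : syzSum F a = 0) : a ∈ trivSyz F := by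
  suffices ∀ k, ∀ a, TupleHom dg a e → syzSum F a = 0 →
      (∀ i : Fin M, k ≤ (i : ℕ) → a i = 0) → a ∈ trivSyz F from
    this M a ha hsyz fun i hi => absurd i.isLt (by omega)
  intro k
  induction k with
  | zero =>
    intro a _ _ hvan
    rw [show a = 0 from funext fun i => hvan i (Nat.zero_le _)]
    exact zero_mem _
  | succ k ih =>
    intro a ha hsyz hvan
    by_cases hk : k < M
    · obtain ⟨t, ht, hat, hatvan⟩ :=
        hreg.exists_mem_trivSyz_sub_vanishing hF he ha hsyz (ι := ⟨k, hk⟩) hvan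
      have hat' : a - t ∈ trivSyz F := ih (a - t) hat
        (by rw [syzSum_sub, hsyz, syzSum_eq_zero_of_mem_trivSyz F ht, sub_zero])
        fun i hi => hatvan i hi
      simpa using add_mem hat' ht
    · exact ih a ha hsyz fun i _ => absurd i.isLt (by omega)

end Regular

section Homogenization

variable {K : Type*} [Field K] {n : ℕ}

noncomputable def topPartRHom : MvPolynomial (Fin (n + 1)) K →ₐ[K] MvPolynomial (Fin n) K :=
  aeval (Fin.lastCases 0 X)

lemma topPartRHom_apply (p : MvPolynomial (Fin (n + 1)) K) : topPartRHom p = topPartR p := rfl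

lemma topPartR_sub (p q : MvPolynomial (Fin (n + 1)) K) :
    topPartR (p - q) = topPartR p - topPartR q :=
  map_sub topPartRHom p q

lemma topPartR_mul (p q : MvPolynomial (Fin (n + 1)) K) :
    topPartR (p * q) = topPartR p * topPartR q :=
  map_mul topPartRHom p q

lemma topPartR_yvar : topPartR (yvar K n) = 0 := by
  simp [topPartR, yvar]

lemma topPartR_rename (p : MvPolynomial (Fin n) K) : topPartR (rename Fin.castSucc p) = p := by
  rw [topPartR, aeval_rename]
  convert aeval_X_left_apply p
  ext
  simp

lemma topPartRHom_surjective : Function.Surjective (topPartRHom (K := K) (n := n)) :=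
  fun p => ⟨rename Fin.castSucc p, topPartR_rename p⟩

lemma _root_.MvPolynomial.IsHomogeneous.topPartR {p : MvPolynomial (Fin (n + 1)) K} {d : ℕ}
    (hp : p.IsHomogeneous d) : (topPartR p).IsHomogeneous d := by
  have := hp.aeval (Fin.lastCases 0 X) (n := 1) fun i => by
    induction i using Fin.lastCases with
    | last => simpa using isHomogeneous_zero (Fin n) K 1
    | cast j => simpa using isHomogeneous_X K j
  rwa [one_mul] at this

lemma yvar_dvd_sub_rename_topPartR (p : MvPolynomial (Fin (n + 1)) K) :
    yvar K n ∣ p - rename Fin.castSucc (topPartR p) := by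
  rw [← Ideal.mem_span_singleton, ← Ideal.Quotient.eq]
  -- modulo `y`, the map `rename Fin.castSucc ∘ topPartR` fixes every variable
  suffices h : ((Ideal.Quotient.mkₐ K _).comp ((rename Fin.castSucc).comp topPartRHom)) =
      Ideal.Quotient.mkₐ K (Ideal.span {yvar K n}) from (DFunLike.congr_fun h p).symm
  refine MvPolynomial.algHom_ext fun i => ?_
  induction i using Fin.lastCases with
  | last =>
    have hy : Ideal.Quotient.mkₐ K (Ideal.span {yvar K n}) (yvar K n) = 0 :=
      Ideal.Quotient.eq_zero_iff_mem.2 (Ideal.mem_span_singleton_self _)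
    rw [← yvar, hy, AlgHom.comp_apply, AlgHom.comp_apply, topPartRHom_apply, topPartR_yvar,
      map_zero, map_zero]
  | cast j => simp [topPartRHom]

lemma yvar_dvd_of_topPartR_eq_zero {p : MvPolynomial (Fin (n + 1)) K} (hp : topPartR p = 0) :
    yvar K n ∣ p := by
  simpa [hp] using yvar_dvd_sub_rename_topPartR p

lemma homog_eq_sum (f : MvPolynomial (Fin n) K) :
    homog f = ∑ s ∈ f.support,
      rename Fin.castSucc (monomial s (coeff s f)) * yvar K n ^ (f.totalDegree - s.degree) := by
  refine Finset.sum_congr rfl fun s _ => ?_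
  rw [monomial_add_single, rename_monomial, extX, Finsupp.embDomain_eq_mapDomain]
  rfl

lemma isHomogeneous_homog (f : MvPolynomial (Fin n) K) :
    (homog f).IsHomogeneous f.totalDegree := by
  rw [homog_eq_sum]
  refine IsHomogeneous.sum _ _ _ fun s hs => ?_
  have hle : s.degree ≤ f.totalDegree := le_totalDegree hs
  have := ((isHomogeneous_monomial (coeff s f) (rfl : s.degree = s.degree)).rename_isHomogeneous
    (f := Fin.castSucc)).mul ((isHomogeneous_X K (Fin.last n)).pow (f.totalDegree - s.degree))
  rwa [one_mul, Nat.add_sub_cancel' hle] at this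

lemma topPartR_homog (f : MvPolynomial (Fin n) K) : topPartR (homog f) = topPart f := by
  classical
  rw [homog_eq_sum, ← topPartRHom_apply, map_sum, topPart, homogeneousComponent_apply,
    Finset.sum_filter]
  refine Finset.sum_congr rfl fun s hs => ?_
  have hle : s.degree ≤ f.totalDegree := le_totalDegree hs
  rw [map_mul, map_pow, topPartRHom_apply, topPartRHom_apply, topPartR_rename, topPartR_yvar,
    zero_pow_eq]
  by_cases h : s.degree = f.totalDegree
  · simp [h]
  · simp [h, show f.totalDegree - s.degree ≠ 0 by omega]

lemma topPartR_syzSum {M : ℕ} (f : Fin M → MvPolynomial (Fin n) K)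
    (a : Fin M → MvPolynomial (Fin (n + 1)) K) :
    topPartR (syzSum (fun i => homog (f i)) a) =
      syzSum (fun i => topPart (f i)) (fun i => topPartR (a i)) := by
  simp only [syzSum, ← topPartRHom_apply, map_sum, map_mul]
  simp only [topPartRHom_apply, topPartR_homog]

end Homogenization

section MulYvar

variable {K : Type*} [Field K] {n M : ℕ} (f : Fin M → MvPolynomial (Fin n) K)
  {dg : Fin M → ℕ}

lemma isHomogeneous_homog_of_totalDegree (hdeg : ∀ i, (f i).totalDegree = dg i) (i : Fin M) :
    (homog (f i)).IsHomogeneous (dg i) :=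
  hdeg i ▸ isHomogeneous_homog (f i)

lemma isHomogeneous_topPart_of_totalDegree (hdeg : ∀ i, (f i).totalDegree = dg i) (i : Fin M) :
    (topPart (f i)).IsHomogeneous (dg i) :=
  hdeg i ▸ homogeneousComponent_isHomogeneous _ _

theorem mem_span_homog_of_yvar_mul_mem (hdeg : ∀ i, (f i).totalDegree = dg i) {D e : ℕ}
    (hreg : IsDRegularSeq (fun i => topPart (f i)) dg D) (he : e + 1 < D)
    {g : MvPolynomial (Fin (n + 1)) K} (hg : g.IsHomogeneous e)
    (hyg : yvar K n * g ∈ Ideal.span (Set.range fun i => homog (f i))) :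
    g ∈ Ideal.span (Set.range fun i => homog (f i)) := by
  obtain ⟨a, ha, -, hsum⟩ := exists_tupleHom_of_mem_span_image
    (isHomogeneous_homog_of_totalDegree f hdeg) ((isHomogeneous_X K _).mul hg)
    (p := yvar K n * g) (S := Set.univ) (by rwa [Set.image_univ])
  have hsyz : syzSum (fun i => topPart (f i)) (fun i => topPartR (a i)) = 0 := by
    rw [← topPartR_syzSum, hsum, topPartR_mul, topPartR_yvar, zero_mul]
  have htriv := hreg.mem_trivSyz (isHomogeneous_topPart_of_totalDegree f hdeg) (by omega)
    (ha.map topPartRHom.toRingHom fun _ _ => IsHomogeneous.topPartR) hsyz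
  simp only [← topPartR_homog] at htriv
  obtain ⟨w, hw, hwa⟩ := exists_mem_trivSyz_map_eq topPartRHom.toRingHom
    topPartRHom_surjective (fun i => homog (f i)) htriv
  choose b hb using fun i => yvar_dvd_of_topPartR_eq_zero (p := a i - w i) (by
    rw [topPartR_sub, sub_eq_zero]
    exact (congrFun hwa i).symm)
  have hyb : yvar K n * g = yvar K n * syzSum (fun i => homog (f i)) b := by
    rw [← hsum, ← sub_zero (syzSum _ a), ← syzSum_eq_zero_of_mem_trivSyz _ hw, ← syzSum_sub,
      syzSum, syzSum, Finset.mul_sum]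
    simp only [Pi.sub_apply, hb, mul_assoc]
  rw [mul_left_cancel₀ (X_ne_zero _) hyb]
  exact syzSum_mem_span_range _ _

theorem exists_sub_yvar_mul_mem_span_homog (hdeg : ∀ i, (f i).totalDegree = dg i) {D d : ℕ}
    (hD : ∀ p : MvPolynomial (Fin n) K, p.IsHomogeneous D →
      p ∈ Ideal.span (Set.range fun i => topPart (f i)))
    (hd : D ≤ d) {g : MvPolynomial (Fin (n + 1)) K} (hg : g.IsHomogeneous d) :
    ∃ h : MvPolynomial (Fin (n + 1)) K, h.IsHomogeneous (d - 1) ∧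
      g - yvar K n * h ∈ Ideal.span (Set.range fun i => homog (f i)) := by
  obtain ⟨c, hc, -, hsum⟩ := exists_tupleHom_of_mem_span_image
    (isHomogeneous_topPart_of_totalDegree f hdeg) hg.topPartR (S := Set.univ)
    (by rw [Set.image_univ]; exact mem_of_isHomogeneous_of_le hD hd hg.topPartR)
  set c' := fun i => rename Fin.castSucc (c i)
  have hc' : TupleHom dg c' d :=
    hc.map (rename Fin.castSucc).toRingHom fun _ _ hp => hp.rename_isHomogeneous
  obtain ⟨h, hh⟩ := yvar_dvd_of_topPartR_eq_zero (p := g - syzSum (fun i => homog (f i)) c') (by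
    simp only [topPartR_sub, topPartR_syzSum, c', topPartR_rename, hsum, sub_self])
  refine ⟨h, IsHomogeneous.of_X_mul (i := Fin.last n) ?_, ?_⟩
  · rw [← yvar, ← hh]
    exact hg.sub (hc'.isHomogeneous_syzSum (isHomogeneous_homog_of_totalDegree f hdeg))
  · rw [← hh, sub_sub_cancel]
    exact syzSum_mem_span_range _ _

end MulYvar

section Hilbert

variable {K : Type*} [Field K] {σ : Type*} {J : Ideal (MvPolynomial σ K)}
  {u : MvPolynomial σ K} {k : ℕ}

noncomputable def quotGradedPiece (J : Ideal (MvPolynomial σ K)) (d : ℕ) :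
    Submodule K (MvPolynomial σ K ⧸ J) :=
  (homogeneousSubmodule σ K d).map (Ideal.Quotient.mkₐ K J).toLinearMap

lemma hilbertFn_eq_finrank (J : Ideal (MvPolynomial σ K)) (d : ℕ) :
    hilbertFn K J d = Module.finrank K (quotGradedPiece J d) := rfl

instance [Finite σ] (J : Ideal (MvPolynomial σ K)) (d : ℕ) :
    Module.Finite K (quotGradedPiece J d) :=
  Module.Finite.iff_fg.2 ((homogeneousSubmodule_fg σ K d).map _)

lemma map_mulLeft_quotGradedPiece_le (hu : u.IsHomogeneous k) (d : ℕ) :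
    (quotGradedPiece J d).map (LinearMap.mulLeft K (Ideal.Quotient.mk J u)) ≤
      quotGradedPiece J (d + k) := by
  rintro _ ⟨_, ⟨p, hp, rfl⟩, rfl⟩
  exact ⟨p * u, hp.mul hu, by simp [mul_comm]⟩

lemma hilbertFn_le_of_mul_injective [Finite σ] (hu : u.IsHomogeneous k) {d : ℕ}
    (hinj : ∀ g : MvPolynomial σ K, g.IsHomogeneous d → u * g ∈ J → g ∈ J) :
    hilbertFn K J d ≤ hilbertFn K J (d + k) := by
  let μ := (LinearMap.mulLeft K (Ideal.Quotient.mk J u)).restrict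
    (Submodule.map_le_iff_le_comap.1 (map_mulLeft_quotGradedPiece_le hu d))
  rw [hilbertFn_eq_finrank, hilbertFn_eq_finrank]
  refine LinearMap.finrank_le_finrank_of_injective (f := μ) ?_
  rw [← LinearMap.ker_eq_bot, Submodule.eq_bot_iff]
  rintro ⟨_, p, hp, rfl⟩ hx
  have hup : Ideal.Quotient.mk J (u * p) = 0 := by
    simpa [μ, LinearMap.restrict_apply, Subtype.ext_iff] using hx
  simpa [Subtype.ext_iff, Ideal.Quotient.eq_zero_iff_mem] using
    hinj p hp (Ideal.Quotient.eq_zero_iff_mem.1 hup)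

lemma hilbertFn_le_of_mul_surjective [Finite σ] {d d' : ℕ}
    (hsurj : ∀ g : MvPolynomial σ K, g.IsHomogeneous d' →
      ∃ h : MvPolynomial σ K, h.IsHomogeneous d ∧ g - u * h ∈ J) :
    hilbertFn K J d' ≤ hilbertFn K J d := by
  have hle : quotGradedPiece J d' ≤
      (quotGradedPiece J d).map (LinearMap.mulLeft K (Ideal.Quotient.mk J u)) := by
    rintro _ ⟨g, hg, rfl⟩
    obtain ⟨h, hh, hmem⟩ := hsurj g hg
    refine ⟨Ideal.Quotient.mk J h, ⟨h, hh, rfl⟩, ?_⟩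
    rw [LinearMap.mulLeft_apply, ← map_mul]
    exact Ideal.Quotient.eq.2 (by rw [← neg_sub]; exact neg_mem hmem)
  rw [hilbertFn_eq_finrank, hilbertFn_eq_finrank]
  exact (Submodule.finrank_mono hle).trans (Submodule.finrank_map_le _ _)

end Hilbert

end GBPaper

open GBPaper

theorem stmt4_general {K : Type*} [Field K] {n M : ℕ}
    (f : Fin M → MvPolynomial (Fin n) K) (dg : Fin M → ℕ)
    (hdeg : ∀ i, (f i).totalDegree = dg i)
    (hArt : ∃ d : ℕ, ∀ g : MvPolynomial (Fin n) K, g.IsHomogeneous d →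
      g ∈ Ideal.span (Set.range fun i => topPart (f i)))
    (hcsr : IsDRegularSeq (fun i => topPart (f i)) dg
      (degReg K (Ideal.span (Set.range fun i => topPart (f i))))) :
    (∀ d : ℕ, 0 < d →
        d < degReg K (Ideal.span (Set.range fun i => topPart (f i))) →
        ∀ g : MvPolynomial (Fin (n + 1)) K, g.IsHomogeneous (d - 1) →
          yvar K n * g ∈ Ideal.span (Set.range fun i => homog (f i)) →
          g ∈ Ideal.span (Set.range fun i => homog (f i))) ∧
    (∀ d : ℕ, degReg K (Ideal.span (Set.range fun i => topPart (f i))) ≤ d →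
        ∀ g : MvPolynomial (Fin (n + 1)) K, g.IsHomogeneous d →
          ∃ h : MvPolynomial (Fin (n + 1)) K, h.IsHomogeneous (d - 1) ∧
            g - yvar K n * h ∈ Ideal.span (Set.range fun i => homog (f i))) ∧
    (∀ d : ℕ, d + 1 < degReg K (Ideal.span (Set.range fun i => topPart (f i))) →
        hilbertFn K (Ideal.span (Set.range fun i => homog (f i))) d ≤
          hilbertFn K (Ideal.span (Set.range fun i => homog (f i))) (d + 1)) ∧
    (∀ d : ℕ, degReg K (Ideal.span (Set.range fun i => topPart (f i))) ≤ d + 1 →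
        hilbertFn K (Ideal.span (Set.range fun i => homog (f i))) (d + 1) ≤
          hilbertFn K (Ideal.span (Set.range fun i => homog (f i))) d) := by
  have hinj := fun e (he : e + 1 < degReg K _) g (hg : IsHomogeneous g e) =>
    mem_span_homog_of_yvar_mul_mem f hdeg hcsr he hg
  have hsurj := fun d (hd : degReg K _ ≤ d) g (hg : IsHomogeneous g d) =>
    exists_sub_yvar_mul_mem_span_homog f hdeg (Nat.sInf_mem hArt) hd hg
  refine ⟨fun d hd0 hdD g hg => hinj (d - 1) (by omega) g hg, hsurj, fun d hd => ?_,
    fun d hd => ?_⟩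
  · exact hilbertFn_le_of_mul_injective (isHomogeneous_X K _) (hinj d hd)
  · exact hilbertFn_le_of_mul_surjective fun g hg => hsurj (d + 1) hd g hg

/-- for an affine cryptographic semi-regular sequence with
`D = d_reg(⟨F^top⟩) < ∞`, multiplication by `y` on `R'/⟨F^h⟩` is injective into
all degrees `< D` and surjective onto all degrees `≥ D`; in particular the Hilbert
function increases up to degree `D-1` and is non-increasing afterwards. -/
theorem stmt4 {K : Type*} [Field K] {n M : ℕ}
    (f : Fin M → MvPolynomial (Fin n) K) (dg : Fin M → ℕ)
    (hdeg : ∀ i, (f i).totalDegree = dg i) (hpos : ∀ i, 0 < dg i)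
    (hArt : ∃ d : ℕ, ∀ g : MvPolynomial (Fin n) K, g.IsHomogeneous d →
      g ∈ Ideal.span (Set.range fun i => topPart (f i)))
    (hcsr : IsDRegularSeq (fun i => topPart (f i)) dg
      (degReg K (Ideal.span (Set.range fun i => topPart (f i))))) :
    (∀ d : ℕ, 0 < d →
        d < degReg K (Ideal.span (Set.range fun i => topPart (f i))) →
        ∀ g : MvPolynomial (Fin (n + 1)) K, g.IsHomogeneous (d - 1) →
          yvar K n * g ∈ Ideal.span (Set.range fun i => homog (f i)) →
          g ∈ Ideal.span (Set.range fun i => homog (f i))) ∧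
    (∀ d : ℕ, degReg K (Ideal.span (Set.range fun i => topPart (f i))) ≤ d →
        ∀ g : MvPolynomial (Fin (n + 1)) K, g.IsHomogeneous d →
          ∃ h : MvPolynomial (Fin (n + 1)) K, h.IsHomogeneous (d - 1) ∧
            g - yvar K n * h ∈ Ideal.span (Set.range fun i => homog (f i))) ∧
    (∀ d : ℕ, d + 1 < degReg K (Ideal.span (Set.range fun i => topPart (f i))) →
        hilbertFn K (Ideal.span (Set.range fun i => homog (f i))) d ≤
          hilbertFn K (Ideal.span (Set.range fun i => homog (f i))) (d + 1)) ∧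
    (∀ d : ℕ, degReg K (Ideal.span (Set.range fun i => topPart (f i))) ≤ d + 1 →
        hilbertFn K (Ideal.span (Set.range fun i => homog (f i))) (d + 1) ≤
          hilbertFn K (Ideal.span (Set.range fun i => homog (f i))) d) :=
  stmt4_general f dg hdeg hArt hcsr
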